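/- Let X be a connected simple graph with vertex set V and capacity function c assigning a positive integer to each edge, and let s, t be distinct vertices such that some cut separates s and t. Let n be the minimal capacity of a cut separating s and t. Then there exists a cut D with s ∈ D, t ∈ D* and c(D) = n such that D ⊆ A for every cut A with s ∈ A, t ∈ A* and c(A) = n; in particular the smallest minimum-capacity cut separating s and t is unique. -/

import Mathlib

open Classical

/-- The set of edges of `G` with one endpoint in `A` and one in the complement of `A`. -/
def cutEdges {V : Type*} (G : SimpleGraph V) (A : Set V) : Set (Sym2 V) :=
  {e | e ∈ G.edgeSet ∧ ∃ u v, e = s(u, v) ∧ u ∈ A ∧ v ∉ A}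

/-- The capacity of a cut: the sum of the capacities of the edges across it. -/
noncomputable def cutCap {V : Type*} (G : SimpleGraph V) (c : Sym2 V → ℕ) (A : Set V) : ℕ :=
  ∑ᶠ e ∈ cutEdges G A, c e

/-- A cut: a nonempty proper subset of the vertices with finite edge boundary. -/
def IsCut {V : Type*} (G : SimpleGraph V) (A : Set V) : Prop :=
  A ≠ ∅ ∧ A ≠ Set.univ ∧ (cutEdges G A).Finite

/-- A cut `A` separates the vertices `u` and `v`. -/
def SeparatesV {V : Type*} (A : Set V) (u v : V) : Prop :=
  (u ∈ A ∧ v ∉ A) ∨ (v ∈ A ∧ u ∉ A)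

/-!
The minimum cuts containing `s` and avoiding `t` are closed under intersection, by
submodularity of the cut capacity: `c(A ∩ B) + c(A ∪ B) ≤ c(A) + c(B)` while both `A ∩ B` and
`A ∪ B` separate `s` from `t`, so both have capacity at least `n`. Any finitely many edges
leaving `D`, the intersection of all of them, already leave the intersection of finitely many
of them, which is again a minimum cut. As capacities are positive integers, the boundary of `D`
is therefore finite, of capacity at most `n`, so `D` is the smallest minimum cut.
-/

theorem Set.finite_of_forall_finset_sum_le {α : Type*} {s : Set α} {w : α → ℕ} {n : ℕ}
    (hw : ∀ a ∈ s, 0 < w a) (h : ∀ F : Finset α, ↑F ⊆ s → ∑ a ∈ F, w a ≤ n) : s.Finite := by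
  by_contra hs
  obtain ⟨F, hFs, hcard⟩ := Set.Infinite.exists_subset_card_eq hs (n + 1)
  have : F.card ≤ ∑ a ∈ F, w a := by
    simpa using F.card_nsmul_le_sum w 1 fun a ha => hw a (hFs ha)
  have := h F hFs
  omega

section Cuts

variable {V : Type*} {G : SimpleGraph V}

theorem cutEdges_compl (A : Set V) : cutEdges G Aᶜ = cutEdges G A := by
  ext e
  simp only [cutEdges, Set.mem_compl_iff, not_not]
  constructor <;>
  · rintro ⟨he, u, v, rfl, hu, hv⟩
    exact ⟨he, v, u, Sym2.eq_swap, hv, hu⟩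

theorem cutEdges_inter_subset (A B : Set V) :
    cutEdges G (A ∩ B) ⊆ cutEdges G A ∪ cutEdges G B := by
  rintro e ⟨he, u, v, rfl, ⟨huA, huB⟩, hv⟩
  by_cases hvA : v ∈ A
  · exact Or.inr ⟨he, u, v, rfl, huB, fun hvB => hv ⟨hvA, hvB⟩⟩
  · exact Or.inl ⟨he, u, v, rfl, huA, hvA⟩

theorem cutEdges_union_subset (A B : Set V) :
    cutEdges G (A ∪ B) ⊆ cutEdges G A ∪ cutEdges G B := by
  rintro e ⟨he, u, v, rfl, huA | huB, hv⟩
  · exact Or.inl ⟨he, u, v, rfl, huA, fun hvA => hv (Or.inl hvA)⟩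
  · exact Or.inr ⟨he, u, v, rfl, huB, fun hvB => hv (Or.inr hvB)⟩

theorem cutEdges_inter_inter_cutEdges_union_subset (A B : Set V) :
    cutEdges G (A ∩ B) ∩ cutEdges G (A ∪ B) ⊆ cutEdges G A ∩ cutEdges G B := by
  rintro e ⟨⟨he, u, v, rfl, ⟨huA, huB⟩, -⟩, ⟨-, u', v', huv, -, hv'⟩⟩
  rcases Sym2.eq_iff.mp huv with ⟨-, hvv'⟩ | ⟨huv', -⟩
  · rw [← hvv'] at hv'
    exact ⟨⟨he, u, v, rfl, huA, fun h => hv' (Or.inl h)⟩,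
      ⟨he, u, v, rfl, huB, fun h => hv' (Or.inr h)⟩⟩
  · exact absurd (Or.inl (huv' ▸ huA)) hv'

theorem cutCap_eq_sum (c : Sym2 V → ℕ) {A : Set V} (h : (cutEdges G A).Finite) :
    cutCap G c A = ∑ e ∈ h.toFinset, c e := by
  rw [cutCap, ← finsum_mem_coe_finset, Set.Finite.coe_toFinset]

theorem sum_le_cutCap (c : Sym2 V → ℕ) {A : Set V} (h : (cutEdges G A).Finite)
    {F : Finset (Sym2 V)} (hF : ↑F ⊆ cutEdges G A) : ∑ e ∈ F, c e ≤ cutCap G c A := by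
  rw [cutCap_eq_sum c h]
  exact Finset.sum_le_sum_of_subset fun e he => h.mem_toFinset.mpr (hF he)

theorem cutCap_inter_add_cutCap_union_le (c : Sym2 V → ℕ) {A B : Set V}
    (hA : (cutEdges G A).Finite) (hB : (cutEdges G B).Finite) :
    cutCap G c (A ∩ B) + cutCap G c (A ∪ B) ≤ cutCap G c A + cutCap G c B := by
  have hI := (hA.union hB).subset (cutEdges_inter_subset A B)
  have hU := (hA.union hB).subset (cutEdges_union_subset A B)
  rw [cutCap_eq_sum c hA, cutCap_eq_sum c hB, cutCap_eq_sum c hI, cutCap_eq_sum c hU,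
    ← Finset.sum_union_inter (s₁ := hA.toFinset), ← Finset.sum_union_inter (s₁ := hI.toFinset)]
  refine Nat.add_le_add (Finset.sum_le_sum_of_subset ?_) (Finset.sum_le_sum_of_subset ?_)
  · intro e he
    simp only [Finset.mem_union, Set.Finite.mem_toFinset] at he ⊢
    rcases he with he | he
    · exact cutEdges_inter_subset A B he
    · exact cutEdges_union_subset A B he
  · intro e he
    simp only [Finset.mem_inter, Set.Finite.mem_toFinset] at he ⊢
    exact cutEdges_inter_inter_cutEdges_union_subset A B he

theorem isCut_of_mem_of_notMem {A : Set V} {s t : V} (hs : s ∈ A) (ht : t ∉ A)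
    (hfin : (cutEdges G A).Finite) : IsCut G A :=
  ⟨Set.nonempty_iff_ne_empty.mp ⟨s, hs⟩, fun h => ht (h ▸ Set.mem_univ t), hfin⟩

theorem exists_mem_subset_cutEdges_of_subset_cutEdges_sInter {S : Set (Set V)}
    (hS : S.Nonempty) (hinter : ∀ A ∈ S, ∀ B ∈ S, A ∩ B ∈ S)
    {F : Finset (Sym2 V)} (hF : ↑F ⊆ cutEdges G (⋂₀ S)) : ∃ B ∈ S, ↑F ⊆ cutEdges G B := by
  -- Unlike `e ∈ cutEdges G B`, this property survives shrinking `B` inside `S`.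
  suffices h : ∃ B ∈ S, ∀ e ∈ F, ∃ u v, e = s(u, v) ∧ u ∈ ⋂₀ S ∧ v ∉ B by
    obtain ⟨B, hB, hFB⟩ := h
    refine ⟨B, hB, fun e he => ?_⟩
    obtain ⟨u, v, rfl, hu, hv⟩ := hFB e he
    exact ⟨(hF he).1, u, v, rfl, Set.sInter_subset_of_mem hB hu, hv⟩
  induction F using Finset.induction_on with
  | empty =>
    obtain ⟨B, hB⟩ := hS
    exact ⟨B, hB, by simp⟩
  | insert e F _ ih =>
    obtain ⟨B, hB, hFB⟩ := ih (subset_trans (by simp) hF)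
    obtain ⟨-, u, v, rfl, hu, hv⟩ := hF (Finset.mem_coe.mpr (Finset.mem_insert_self e F))
    obtain ⟨Bₑ, hBₑ, hvBₑ⟩ : ∃ Bₑ ∈ S, v ∉ Bₑ := by simpa [Set.mem_sInter] using hv
    refine ⟨Bₑ ∩ B, hinter _ hBₑ _ hB, ?_⟩
    simp only [Finset.mem_insert, forall_eq_or_imp]
    refine ⟨⟨u, v, rfl, hu, fun h => hvBₑ h.1⟩, fun e' he' => ?_⟩
    obtain ⟨u', v', rfl, hu', hv'⟩ := hFB e' he'
    exact ⟨u', v', rfl, hu', fun h => hv' h.2⟩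

variable {c : Sym2 V → ℕ} {n : ℕ} {S : Set (Set V)}

theorem sum_le_of_subset_cutEdges_sInter (hS : S.Nonempty)
    (hinter : ∀ A ∈ S, ∀ B ∈ S, A ∩ B ∈ S)
    (hcap : ∀ A ∈ S, (cutEdges G A).Finite ∧ cutCap G c A ≤ n)
    {F : Finset (Sym2 V)} (hF : ↑F ⊆ cutEdges G (⋂₀ S)) : ∑ e ∈ F, c e ≤ n := by
  obtain ⟨B, hB, hFB⟩ := exists_mem_subset_cutEdges_of_subset_cutEdges_sInter hS hinter hF
  exact (sum_le_cutCap c (hcap B hB).1 hFB).trans (hcap B hB).2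

theorem finite_cutEdges_sInter (hc : ∀ e ∈ G.edgeSet, 0 < c e) (hS : S.Nonempty)
    (hinter : ∀ A ∈ S, ∀ B ∈ S, A ∩ B ∈ S)
    (hcap : ∀ A ∈ S, (cutEdges G A).Finite ∧ cutCap G c A ≤ n) :
    (cutEdges G (⋂₀ S)).Finite :=
  Set.finite_of_forall_finset_sum_le (fun e he => hc e he.1)
    fun _ hF => sum_le_of_subset_cutEdges_sInter hS hinter hcap hF

theorem cutCap_sInter_le (hc : ∀ e ∈ G.edgeSet, 0 < c e) (hS : S.Nonempty)
    (hinter : ∀ A ∈ S, ∀ B ∈ S, A ∩ B ∈ S)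
    (hcap : ∀ A ∈ S, (cutEdges G A).Finite ∧ cutCap G c A ≤ n) :
    cutCap G c (⋂₀ S) ≤ n := by
  have hfin := finite_cutEdges_sInter hc hS hinter hcap
  rw [cutCap_eq_sum c hfin]
  exact sum_le_of_subset_cutEdges_sInter hS hinter hcap (by simp)

end Cuts

section MinCuts

variable {V : Type*} {G : SimpleGraph V} {c : Sym2 V → ℕ} {s t : V} {n : ℕ}

def minCuts (G : SimpleGraph V) (c : Sym2 V → ℕ) (s t : V) (n : ℕ) : Set (Set V) :=
  {A | IsCut G A ∧ s ∈ A ∧ t ∉ A ∧ cutCap G c A = n}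

theorem inter_mem_minCuts
    (hlow : ∀ A : Set V, IsCut G A → s ∈ A → t ∉ A → n ≤ cutCap G c A)
    {A B : Set V} (hA : A ∈ minCuts G c s t n) (hB : B ∈ minCuts G c s t n) :
    A ∩ B ∈ minCuts G c s t n := by
  obtain ⟨hAcut, hsA, htA, hcA⟩ := hA
  obtain ⟨hBcut, hsB, htB, hcB⟩ := hB
  have hI := (hAcut.2.2.union hBcut.2.2).subset (cutEdges_inter_subset A B)
  have hU := (hAcut.2.2.union hBcut.2.2).subset (cutEdges_union_subset A B)
  have htI : t ∉ A ∩ B := fun h => htA h.1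
  have htU : t ∉ A ∪ B := fun h => h.elim htA htB
  have hsI : s ∈ A ∩ B := ⟨hsA, hsB⟩
  have hsU : s ∈ A ∪ B := Or.inl hsA
  have hIcut : IsCut G (A ∩ B) := isCut_of_mem_of_notMem hsI htI hI
  have hcI := hlow _ hIcut hsI htI
  have hcU := hlow _ (isCut_of_mem_of_notMem hsU htU hU) hsU htU
  have hsub := cutCap_inter_add_cutCap_union_le c hAcut.2.2 hBcut.2.2
  exact ⟨hIcut, hsI, htI, by omega⟩

theorem minCuts_nonempty (hsep : ∃ A : Set V, IsCut G A ∧ SeparatesV A s t)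
    (hn : n = sInf {k : ℕ | ∃ A : Set V, IsCut G A ∧ SeparatesV A s t ∧ cutCap G c A = k}) :
    (minCuts G c s t n).Nonempty := by
  obtain ⟨A, hA, hAst⟩ := hsep
  have hmem : n ∈ {k : ℕ | ∃ A : Set V, IsCut G A ∧ SeparatesV A s t ∧ cutCap G c A = k} :=
    hn ▸ Nat.sInf_mem ⟨_, A, hA, hAst, rfl⟩
  obtain ⟨A, hA, hAst, hAcap⟩ := hmem
  rcases hAst with ⟨hs, ht⟩ | ⟨ht, hs⟩
  · exact ⟨A, hA, hs, ht, hAcap⟩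
  · refine ⟨Aᶜ, isCut_of_mem_of_notMem hs (not_not.mpr ht) ?_, hs, not_not.mpr ht, ?_⟩
    · rw [cutEdges_compl]; exact hA.2.2
    · rw [cutCap, cutEdges_compl]; exact hAcap

end MinCuts

theorem smallest_min_cut_unique_general {V : Type*} (G : SimpleGraph V)
    (c : Sym2 V → ℕ) (hc : ∀ e ∈ G.edgeSet, 0 < c e) (s t : V)
    (hsep : ∃ A : Set V, IsCut G A ∧ SeparatesV A s t)
    (n : ℕ)
    (hn : n = sInf {k : ℕ | ∃ A : Set V, IsCut G A ∧ SeparatesV A s t ∧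
      cutCap G c A = k}) :
    ∃ D : Set V, IsCut G D ∧ s ∈ D ∧ t ∉ D ∧ cutCap G c D = n ∧
      ∀ A : Set V, IsCut G A → s ∈ A → t ∉ A → cutCap G c A = n → D ⊆ A := by
  have hlow : ∀ A : Set V, IsCut G A → s ∈ A → t ∉ A → n ≤ cutCap G c A :=
    fun A hA hs ht => hn ▸ Nat.sInf_le ⟨A, hA, Or.inl ⟨hs, ht⟩, rfl⟩
  set S := minCuts G c s t n
  have hS : S.Nonempty := minCuts_nonempty hsep hn
  have hinter : ∀ A ∈ S, ∀ B ∈ S, A ∩ B ∈ S := fun A hA B hB => inter_mem_minCuts hlow hA hB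
  have hcap : ∀ A ∈ S, (cutEdges G A).Finite ∧ cutCap G c A ≤ n :=
    fun A hA => ⟨hA.1.2.2, hA.2.2.2.le⟩
  have hs : s ∈ ⋂₀ S := fun A hA => hA.2.1
  have ht : t ∉ ⋂₀ S := fun h => hS.some_mem.2.2.1 (h _ hS.some_mem)
  have hcut := isCut_of_mem_of_notMem hs ht (finite_cutEdges_sInter hc hS hinter hcap)
  exact ⟨⋂₀ S, hcut, hs, ht, (cutCap_sInter_le hc hS hinter hcap).antisymm (hlow _ hcut hs ht),
    fun A hA hsA htA hcA => Set.sInter_subset_of_mem ⟨hA, hsA, htA, hcA⟩⟩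

/-- There is a unique smallest minimum-capacity cut separating `s` and `t`: a cut `D`
with `s ∈ D`, `t ∉ D` and `c(D) = n` which is contained in every cut `A` with `s ∈ A`,
`t ∉ A` and `c(A) = n`, where `n` is the minimal capacity of a cut separating `s`, `t`. -/
theorem smallest_min_cut_unique {V : Type*} (G : SimpleGraph V) (hG : G.Connected)
    (c : Sym2 V → ℕ) (hc : ∀ e ∈ G.edgeSet, 0 < c e) (s t : V) (hst : s ≠ t)
    (hsep : ∃ A : Set V, IsCut G A ∧ SeparatesV A s t)
    (n : ℕ)
    (hn : n = sInf {k : ℕ | ∃ A : Set V, IsCut G A ∧ SeparatesV A s t ∧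
      cutCap G c A = k}) :
    ∃ D : Set V, IsCut G D ∧ s ∈ D ∧ t ∉ D ∧ cutCap G c D = n ∧
      ∀ A : Set V, IsCut G A → s ∈ A → t ∉ A → cutCap G c A = n → D ⊆ A :=
  smallest_min_cut_unique_general G c hc s t hsep n hn
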